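/- Let n ≥ 1, let D_1,…,D_m be delta-matroids on [n, n̄] with feasible-set collections F_1,…,F_m, and let c_1,…,c_m ∈ ℤ. If Σ_{j=1}^m c_j · 1_{P(D_j)}(x) = 0 for every x ∈ ℝ^n (where 1_{P(D_j)} is the indicator function of the polytope P(D_j)), then Σ_{j=1}^m c_j · |F_j| = 0. That is, the function sending a delta-matroid to its number of feasible sets is valuative. -/

import Mathlib

open Finset

/-- The 0/1 indicator vector `e_S ∈ ℝ^n` of a subset `S ⊆ [n]`. -/
def eVec {n : ℕ} (S : Finset (Fin n)) : Fin n → ℝ := fun i => if i ∈ S then 1 else 0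

/-- The base polytope `P(D) = conv{e_{B ∩ [n]} : B ∈ F}`, where a maximal admissible subset
`B ⊆ [n] ∪ [n̄]` is identified with the subset `B ∩ [n]` of `[n]` (this identification is a
bijection between maximal admissible subsets and subsets of `[n]`). -/
def basePolytope {n : ℕ} (F : Finset (Finset (Fin n))) : Set (Fin n → ℝ) :=
  convexHull ℝ (eVec '' (F : Set (Finset (Fin n))))

/-- `d` is `±e_i`, `±(e_i + e_j)` or `±(e_i - e_j)` for some `i, j ∈ [n]`, i.e. a segment
from `x` to `x + d` is a parallel translate of `e_i` or `e_i ± e_j`. -/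
def IsEdgeDir {n : ℕ} (d : Fin n → ℝ) : Prop :=
  (∃ i : Fin n, d = Pi.single i 1 ∨ d = -Pi.single i 1) ∨
  (∃ i j : Fin n, d = Pi.single i 1 + Pi.single j 1 ∨
      d = -(Pi.single i 1 + Pi.single j 1) ∨ d = Pi.single i 1 - Pi.single j 1)

/-- A delta-matroid on `[n, n̄]`: a nonempty collection of (maximal admissible) feasible sets,
each recorded via its intersection with `[n]`, such that every edge of the base polytope
(i.e. every segment between two distinct points which is an extreme subset of the polytope)
is a parallel translate of `e_i` or `e_i ± e_j`. -/
structure DeltaMatroid (n : ℕ) where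
  feasible : Finset (Finset (Fin n))
  feasible_nonempty : feasible.Nonempty
  edge_dir : ∀ x y : Fin n → ℝ, x ∈ basePolytope feasible → y ∈ basePolytope feasible →
      x ≠ y → IsExtreme ℝ (basePolytope feasible) (segment ℝ x y) → IsEdgeDir (y - x)

/-!
Every point of `{0,1}ⁿ` is an extreme point of the cube `[0,1]ⁿ`, hence of any polytope `P(D)`
inside the cube that contains it; so `P(D) ∩ {0,1}ⁿ` consists of the vertices `e_B`, `B ∈ F`.
Thus `|F| = ∑_{S ⊆ [n]} 1_{P(D)}(e_S)` is a sum of point evaluations of the indicator function,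
which is linear in it.
-/

lemma eVec_injective {n : ℕ} : Function.Injective (eVec (n := n)) := by
  intro S T hST
  ext i
  have := congrFun hST i
  by_cases hS : i ∈ S <;> by_cases hT : i ∈ T <;> simp_all [eVec]

lemma basePolytope_subset_cube {n : ℕ} (F : Finset (Finset (Fin n))) :
    basePolytope F ⊆ Set.univ.pi fun _ => Set.Icc (0 : ℝ) 1 := by
  refine convexHull_min ?_ (convex_pi fun _ _ => convex_Icc 0 1)
  rintro _ ⟨S, -, rfl⟩ i -
  by_cases h : i ∈ S <;> simp [eVec, h]

lemma eVec_mem_extremePoints_cube {n : ℕ} (S : Finset (Fin n)) :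
    eVec S ∈ (Set.univ.pi fun _ => Set.Icc (0 : ℝ) 1).extremePoints ℝ := by
  rw [extremePoints_pi]
  intro i _
  rw [Set.extremePoints_Icc zero_le_one]
  by_cases h : i ∈ S <;> simp [eVec, h]

lemma eVec_mem_basePolytope_iff {n : ℕ} (F : Finset (Finset (Fin n))) (S : Finset (Fin n)) :
    eVec S ∈ basePolytope F ↔ S ∈ F := by
  refine ⟨fun hmem => ?_, fun hS => subset_convexHull ℝ _ ⟨S, hS, rfl⟩⟩
  have hext : eVec S ∈ (basePolytope F).extremePoints ℝ :=
    inter_extremePoints_subset_extremePoints_of_subset (basePolytope_subset_cube F)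
      ⟨hmem, eVec_mem_extremePoints_cube S⟩
  obtain ⟨T, hT, hTS⟩ := extremePoints_convexHull_subset hext
  rwa [eVec_injective hTS] at hT

lemma indicator_basePolytope_eVec {n : ℕ} (F : Finset (Finset (Fin n))) (S : Finset (Fin n)) :
    Set.indicator (basePolytope F) (fun _ => (1 : ℤ)) (eVec S) = if S ∈ F then 1 else 0 := by
  by_cases hS : S ∈ F
  · rw [Set.indicator_of_mem ((eVec_mem_basePolytope_iff F S).2 hS), if_pos hS]
  · rw [Set.indicator_of_notMem (mt (eVec_mem_basePolytope_iff F S).1 hS), if_neg hS]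

lemma card_eq_sum_indicator_basePolytope {n : ℕ} (F : Finset (Finset (Fin n))) :
    (F.card : ℤ) =
      ∑ S : Finset (Fin n), Set.indicator (basePolytope F) (fun _ => (1 : ℤ)) (eVec S) := by
  simp [indicator_basePolytope_eVec, Finset.sum_ite_mem]

theorem stmt14_general {n m : ℕ} (D : Fin m → DeltaMatroid n) (c : Fin m → ℤ)
    (h : ∀ x : Fin n → ℝ,
      ∑ j, c j * Set.indicator (basePolytope (D j).feasible) (fun _ => (1 : ℤ)) x = 0) :
    ∑ j, c j * ((D j).feasible.card : ℤ) = 0 := by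
  simp_rw [card_eq_sum_indicator_basePolytope, Finset.mul_sum]
  rw [Finset.sum_comm]
  exact Finset.sum_eq_zero fun S _ => h (eVec S)

/-- Valuativity of the number of feasible sets: if an integer combination of indicator
functions of the base polytopes `P(D_j)` vanishes identically on `ℝ^n`, then the same
combination of the numbers of feasible sets vanishes. -/
theorem stmt14 {n m : ℕ} (hn : 1 ≤ n) (D : Fin m → DeltaMatroid n) (c : Fin m → ℤ)
    (h : ∀ x : Fin n → ℝ,
      ∑ j, c j * Set.indicator (basePolytope (D j).feasible) (fun _ => (1 : ℤ)) x = 0) :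
    ∑ j, c j * ((D j).feasible.card : ℤ) = 0 :=
  stmt14_general D c h
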